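/- Any nontrivial continuous lump solution decays at most quadratically: let α > 4/5 and let φ ∈ X_{α/2} be a lump solution of the (rescaled) steady fKP-I equation that agrees almost everywhere with a continuous function φ̃ : ℝ² → ℝ. If there exist δ > 2 and C > 0 with |φ̃(x,y)| ≤ C·(1 + x² + y²)^{−δ/2} for all (x,y) ∈ ℝ², then φ = 0 almost everywhere. -/

import Mathlib

open MeasureTheory Filter Complex
open scoped Topology

noncomputable section

/-- The Fourier transform on `ℝ²` with kernel `e^{-2πi x·ξ}` (Bochner integral). -/
def FT2 (f : ℝ × ℝ → ℂ) (ξ : ℝ × ℝ) : ℂ :=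
  ∫ x : ℝ × ℝ, Complex.exp (-(2 * Real.pi * Complex.I) * ((x.1 * ξ.1 + x.2 * ξ.2 : ℝ) : ℂ)) * f x

/-- `HasFT2 f F` means `f, F ∈ L²(ℝ²)` and `F` is the Fourier–Plancherel transform of `f`,
characterized by the Parseval relation tested against Schwartz functions. -/
def HasFT2 (f F : ℝ × ℝ → ℂ) : Prop :=
  MemLp f 2 (volume : Measure (ℝ × ℝ)) ∧ MemLp F 2 (volume : Measure (ℝ × ℝ)) ∧
    ∀ ψ : SchwartzMap (ℝ × ℝ) ℂ, ∫ ξ, F ξ * ψ ξ = ∫ x, f x * FT2 (fun y => ψ y) x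

/-- `IsEnergyTriple α φ g h`: `φ` is a real-valued `L²` function on `ℝ²` belonging to the
energy space `X_{α/2}`, with `g = D_x^{α/2} φ` and `h = ∂_x⁻¹ ∂_y φ`, i.e. `g, h ∈ L²` and
their Fourier–Plancherel transforms satisfy `ĝ(ξ) = |ξ₁|^{α/2} φ̂(ξ)` and
`ĥ(ξ) = (ξ₂/ξ₁) φ̂(ξ)` almost everywhere. -/
def IsEnergyTriple (α : ℝ) (φ g h : ℝ × ℝ → ℝ) : Prop :=
  ∃ Φ G H : ℝ × ℝ → ℂ,
    HasFT2 (fun x => (φ x : ℂ)) Φ ∧ HasFT2 (fun x => (g x : ℂ)) G ∧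
      HasFT2 (fun x => (h x : ℂ)) H ∧
      (∀ᵐ ξ : ℝ × ℝ ∂volume, G ξ = ((|ξ.1| ^ (α / 2) : ℝ) : ℂ) * Φ ξ) ∧
      (∀ᵐ ξ : ℝ × ℝ ∂volume, H ξ = ((ξ.2 / ξ.1 : ℝ) : ℂ) * Φ ξ)

/-- Membership in the energy space `X_{α/2}`. -/
def MemX (α : ℝ) (φ : ℝ × ℝ → ℝ) : Prop := ∃ g h, IsEnergyTriple α φ g h

/-- A lump solution of the (rescaled) steady fKP-I equation: `φ ∈ X_{α/2}` and
`(1 + |ξ₁|^α + ξ₂²/ξ₁²) φ̂(ξ) = (1/2) (φ²)^(ξ)` for a.e. `ξ` with `ξ₁ ≠ 0`. -/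
def IsLump (α : ℝ) (φ : ℝ × ℝ → ℝ) : Prop :=
  MemX α φ ∧
    ∃ Φ : ℝ × ℝ → ℂ, HasFT2 (fun x => (φ x : ℂ)) Φ ∧
      ∀ᵐ ξ : ℝ × ℝ ∂volume, ξ.1 ≠ 0 →
        ((1 + |ξ.1| ^ α + ξ.2 ^ 2 / ξ.1 ^ 2 : ℝ) : ℂ) * Φ ξ
          = (1 / 2) * FT2 (fun x => ((φ x ^ 2 : ℝ) : ℂ)) ξ

/-!
If `φ` decays faster than `|x|⁻²`, then `φ` and `φ²` are integrable, so `φ̂` and `(φ²)^` are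
continuous and the equation `m φ̂ = (φ²)^ / 2` holds at every `ξ` with `ξ₁ ≠ 0`, where `m` is
the symbol `1 + |ξ₁|^α + ξ₂²/ξ₁²`. Approaching the origin along the `ξ₁`-axis, where `m → 1`
(this needs `α > 0`), gives `φ̂(0) = (φ²)^(0) / 2`; approaching it along the parabola
`ξ₁ = ξ₂²`, where `m → ∞`, gives `φ̂(0) = 0`. Hence `∫ φ² = (φ²)^(0) = 0`.
-/

open scoped Topology

def dotPairing : (ℝ × ℝ) →ₗ[ℝ] (ℝ × ℝ) →ₗ[ℝ] ℝ :=
  LinearMap.mk₂ ℝ (fun (x ξ : ℝ × ℝ) => x.1 * ξ.1 + x.2 * ξ.2)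
    (fun _ _ _ => by simp only [Prod.fst_add, Prod.snd_add]; ring)
    (fun _ _ _ => by simp only [Prod.smul_fst, Prod.smul_snd, smul_eq_mul]; ring)
    (fun _ _ _ => by simp only [Prod.fst_add, Prod.snd_add]; ring)
    (fun _ _ _ => by simp only [Prod.smul_fst, Prod.smul_snd, smul_eq_mul]; ring)

@[simp]
lemma dotPairing_apply (x ξ : ℝ × ℝ) : dotPairing x ξ = x.1 * ξ.1 + x.2 * ξ.2 := rfl

lemma continuous_dotPairing : Continuous fun p : (ℝ × ℝ) × (ℝ × ℝ) => dotPairing p.1 p.2 := by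
  simp only [dotPairing_apply]
  fun_prop

lemma dotPairing_flip : dotPairing.flip = dotPairing :=
  LinearMap.ext₂ fun x ξ => by simp only [LinearMap.flip_apply, dotPairing_apply]; ring

lemma FT2_eq_fourierIntegral (f : ℝ × ℝ → ℂ) :
    FT2 f = VectorFourier.fourierIntegral Real.fourierChar volume dotPairing f := by
  ext ξ
  refine integral_congr_ae (ae_of_all _ fun x => ?_)
  dsimp only
  rw [Circle.smul_def, Real.fourierChar_apply, dotPairing_apply, smul_eq_mul]
  push_cast
  ring_nf

lemma continuous_FT2 {f : ℝ × ℝ → ℂ} (hf : Integrable f) : Continuous (FT2 f) := by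
  rw [FT2_eq_fourierIntegral]
  exact VectorFourier.fourierIntegral_continuous Real.continuous_fourierChar
    continuous_dotPairing hf

lemma integral_FT2_mul {f g : ℝ × ℝ → ℂ} (hf : Integrable f) (hg : Integrable g) :
    ∫ ξ, FT2 f ξ * g ξ = ∫ x, f x * FT2 g x := by
  have h := VectorFourier.integral_fourierIntegral_smul_eq_flip (F := ℂ)
    Real.continuous_fourierChar continuous_dotPairing hf hg
  rw [dotPairing_flip] at h
  simpa only [FT2_eq_fourierIntegral, smul_eq_mul] using h

lemma FT2_zero (f : ℝ × ℝ → ℂ) : FT2 f 0 = ∫ x, f x := by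
  simp [FT2]

lemma HasFT2.ae_eq_FT2 {f F : ℝ × ℝ → ℂ} (hF : HasFT2 f F) (hf : Integrable f) :
    F =ᵐ[volume] FT2 f := by
  obtain ⟨-, hF2, hParseval⟩ := hF
  refine ae_eq_of_integral_contDiff_smul_eq (hF2.locallyIntegrable one_le_two)
    (continuous_FT2 hf).locallyIntegrable fun g hg hsupp => ?_
  let ψ : SchwartzMap (ℝ × ℝ) ℂ :=
    (hsupp.comp_left ofReal_zero).toSchwartzMap (ofRealCLM.contDiff.comp hg)
  have hψ (G : ℝ × ℝ → ℂ) : ∫ x, g x • G x = ∫ ξ, G ξ * ψ ξ := by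
    simp only [real_smul, mul_comm]
    rfl
  rw [hψ, hψ, hParseval ψ, integral_FT2_mul hf ψ.integrable]

lemma norm_sq_le_fst_sq_add_snd_sq (p : ℝ × ℝ) : ‖p‖ ^ 2 ≤ p.1 ^ 2 + p.2 ^ 2 := by
  rw [Prod.norm_def, Real.norm_eq_abs, Real.norm_eq_abs]
  rcases max_choice |p.1| |p.2| with h | h <;> rw [h, sq_abs] <;> nlinarith

section Decay

variable {f : ℝ × ℝ → ℝ} {δ C : ℝ}

lemma integrable_of_abs_le_decay (hf : AEStronglyMeasurable f) (hδ : 2 < δ)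
    (hdec : ∀ᵐ p ∂volume, |f p| ≤ C * (1 + p.1 ^ 2 + p.2 ^ 2) ^ (-(δ / 2))) :
    Integrable f := by
  have hdim : (Module.finrank ℝ (ℝ × ℝ) : ℝ) < δ := by simpa using hδ
  refine ((integrable_rpow_neg_one_add_norm_sq hdim).const_mul |C|).mono' hf ?_
  filter_upwards [hdec] with p hp
  calc ‖f p‖ ≤ C * (1 + p.1 ^ 2 + p.2 ^ 2) ^ (-(δ / 2)) := hp
    _ ≤ |C| * (1 + p.1 ^ 2 + p.2 ^ 2) ^ (-(δ / 2)) := by gcongr; exact le_abs_self C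
    _ ≤ |C| * (1 + ‖p‖ ^ 2) ^ (-δ / 2) := by
      rw [neg_div]
      gcongr ?_ * ?_
      exact Real.rpow_le_rpow_of_nonpos (by positivity)
        (by linarith [norm_sq_le_fst_sq_add_snd_sq p]) (by linarith)

lemma integrable_sq_of_abs_le_decay (hf : AEStronglyMeasurable f) (hδ : 2 < δ)
    (hdec : ∀ᵐ p ∂volume, |f p| ≤ C * (1 + p.1 ^ 2 + p.2 ^ 2) ^ (-(δ / 2))) :
    Integrable fun p => f p ^ 2 := by
  have hbdd : ∀ᵐ p ∂volume, ‖f p‖ ≤ |C| := by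
    filter_upwards [hdec] with p hp
    have hweight : (1 + p.1 ^ 2 + p.2 ^ 2) ^ (-(δ / 2)) ≤ 1 :=
      Real.rpow_le_one_of_one_le_of_nonpos (by nlinarith) (by linarith)
    calc ‖f p‖ ≤ C * (1 + p.1 ^ 2 + p.2 ^ 2) ^ (-(δ / 2)) := hp
      _ ≤ |C| * 1 := by gcongr; exact le_abs_self C
      _ = |C| := mul_one _
  simpa only [sq] using (integrable_of_abs_le_decay hf hδ hdec).bdd_mul hf hbdd

end Decay

def lumpSymbol (α : ℝ) (ξ : ℝ × ℝ) : ℝ := 1 + |ξ.1| ^ α + ξ.2 ^ 2 / ξ.1 ^ 2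

section Symbol

variable {α : ℝ}

lemma lumpSymbol_pos (α : ℝ) (ξ : ℝ × ℝ) : 0 < lumpSymbol α ξ := by
  unfold lumpSymbol
  positivity

lemma continuousOn_lumpSymbol : ContinuousOn (lumpSymbol α) {ξ | ξ.1 ≠ 0} := by
  intro ξ hξ
  have hξ1 : ξ.1 ≠ 0 := hξ
  refine ContinuousAt.continuousWithinAt ?_
  have hrpow : ContinuousAt (fun η : ℝ × ℝ => |η.1| ^ α) ξ :=
    (continuous_abs.comp continuous_fst).continuousAt.rpow_const (Or.inl (abs_ne_zero.mpr hξ1))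
  exact (continuousAt_const.add hrpow).add
    ((continuous_snd.pow 2).continuousAt.div (continuous_fst.pow 2).continuousAt
      (pow_ne_zero 2 hξ1))

lemma tendsto_lumpSymbol_axis (hα : 0 < α) :
    Tendsto (fun s : ℝ => lumpSymbol α (s, 0)) (𝓝[>] 0) (𝓝 1) := by
  have hcont : Continuous fun s : ℝ => 1 + |s| ^ α :=
    continuous_const.add ((Real.continuous_rpow_const hα.le).comp continuous_abs)
  simpa [lumpSymbol, Real.zero_rpow hα.ne'] using (hcont.tendsto 0).mono_left nhdsWithin_le_nhds

lemma tendsto_lumpSymbol_parabola :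
    Tendsto (fun s : ℝ => lumpSymbol α (s ^ 2, s)) (𝓝[>] 0) atTop := by
  refine tendsto_atTop_mono' _ ?_ ((tendsto_pow_atTop two_ne_zero).comp tendsto_inv_nhdsGT_zero)
  filter_upwards [self_mem_nhdsWithin] with s (hs : 0 < s)
  have hquot : s ^ 2 / (s ^ 2) ^ 2 = s⁻¹ ^ 2 := by field_simp
  simp only [Function.comp_apply, lumpSymbol, hquot]
  linarith [Real.rpow_nonneg (abs_nonneg (s ^ 2)) α]

end Symbol

section Origin

variable {α : ℝ} {F S : ℝ × ℝ → ℂ}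

lemma lumpSymbol_mul_eq_of_ae_eq {Φ : ℝ × ℝ → ℂ} (hF : Continuous F) (hS : Continuous S)
    (hΦF : Φ =ᵐ[volume] F)
    (h : ∀ᵐ ξ ∂volume, ξ.1 ≠ 0 → (lumpSymbol α ξ : ℂ) * Φ ξ = 1 / 2 * S ξ) :
    ∀ ξ : ℝ × ℝ, ξ.1 ≠ 0 → (lumpSymbol α ξ : ℂ) * F ξ = 1 / 2 * S ξ := by
  have hU : IsOpen {ξ : ℝ × ℝ | ξ.1 ≠ 0} := isOpen_compl_singleton.preimage continuous_fst
  refine fun ξ hξ => Measure.eqOn_open_of_ae_eq (μ := volume) ?_ hU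
    ((continuous_ofReal.comp_continuousOn continuousOn_lumpSymbol).mul hF.continuousOn)
    (continuous_const.mul hS).continuousOn (show ξ ∈ {ξ : ℝ × ℝ | ξ.1 ≠ 0} from hξ)
  refine (ae_restrict_iff' hU.measurableSet).2 ?_
  filter_upwards [h, hΦF] with η hη hΦη hη1
  simpa only [Pi.mul_apply, Function.comp_apply, hΦη] using hη hη1

variable (hF : Continuous F) (hS : Continuous S)
  (h : ∀ ξ : ℝ × ℝ, ξ.1 ≠ 0 → (lumpSymbol α ξ : ℂ) * F ξ = 1 / 2 * S ξ)
include hF hS h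

lemma apply_zero_eq_half_of_lumpSymbol_mul_eq (hα : 0 < α) : F 0 = 1 / 2 * S 0 := by
  have hpath : Tendsto (fun s : ℝ => ((s, 0) : ℝ × ℝ)) (𝓝[>] 0) (𝓝 0) :=
    (Continuous.prodMk_left 0).tendsto' 0 0 rfl |>.mono_left nhdsWithin_le_nhds
  have hlhs := ((continuous_ofReal.tendsto 1).comp (tendsto_lumpSymbol_axis hα)).mul
    ((hF.tendsto 0).comp hpath)
  have hrhs := tendsto_const_nhds (x := (1 / 2 : ℂ)).mul ((hS.tendsto 0).comp hpath)
  rw [ofReal_one, one_mul] at hlhs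
  refine tendsto_nhds_unique (hlhs.congr' ?_) hrhs
  filter_upwards [self_mem_nhdsWithin] with s (hs : 0 < s)
  exact h (s, 0) hs.ne'

lemma apply_zero_eq_zero_of_lumpSymbol_mul_eq : F 0 = 0 := by
  have hpath : Tendsto (fun s : ℝ => ((s ^ 2, s) : ℝ × ℝ)) (𝓝[>] 0) (𝓝 0) :=
    ((continuous_pow 2).prodMk continuous_id).tendsto' 0 0 (by simp) |>.mono_left
      nhdsWithin_le_nhds
  have hinv := (continuous_ofReal.tendsto 0).comp
    (tendsto_lumpSymbol_parabola (α := α)).inv_tendsto_atTop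
  have hrhs := (tendsto_const_nhds (x := (1 / 2 : ℂ)).mul ((hS.tendsto 0).comp hpath)).mul hinv
  rw [ofReal_zero, mul_zero] at hrhs
  refine tendsto_nhds_unique ((hF.tendsto 0).comp hpath) (hrhs.congr' ?_)
  filter_upwards [self_mem_nhdsWithin] with s (hs : 0 < s)
  have hm : (lumpSymbol α (s ^ 2, s) : ℂ) ≠ 0 := ofReal_ne_zero.2 (lumpSymbol_pos α _).ne'
  simp only [Function.comp_apply, ofReal_inv, Pi.inv_apply]
  rw [← h _ (pow_ne_zero 2 hs.ne'), mul_comm (lumpSymbol α _ : ℂ), mul_assoc, mul_inv_cancel₀ hm,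
    mul_one]

lemma apply_zero_eq_zero_of_lumpSymbol_mul_eq_half_mul (hα : 0 < α) : S 0 = 0 := by
  have h0 := apply_zero_eq_half_of_lumpSymbol_mul_eq hF hS h hα
  rw [apply_zero_eq_zero_of_lumpSymbol_mul_eq hF hS h] at h0
  simpa using h0.symm

end Origin

theorem lump_decays_at_most_quadratically_general (α : ℝ) (hα : 4 / 5 < α) (φ : ℝ × ℝ → ℝ)
    (hφ : IsLump α φ) (φt : ℝ × ℝ → ℝ) (hcont : Continuous φt)
    (hae : ∀ᵐ p : ℝ × ℝ ∂volume, φ p = φt p) (δ C : ℝ) (hδ : 2 < δ)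
    (hdec : ∀ p : ℝ × ℝ, |φt p| ≤ C * (1 + p.1 ^ 2 + p.2 ^ 2) ^ (-(δ / 2))) :
    ∀ᵐ p : ℝ × ℝ ∂volume, φ p = 0 := by
  obtain ⟨-, Φ, hΦ, hlump⟩ := hφ
  have hmeas : AEStronglyMeasurable φ volume :=
    hcont.aestronglyMeasurable.congr (EventuallyEq.symm hae)
  have hφdec : ∀ᵐ p ∂volume, |φ p| ≤ C * (1 + p.1 ^ 2 + p.2 ^ 2) ^ (-(δ / 2)) :=
    hae.mono fun p hp => hp ▸ hdec p
  have hint : Integrable fun p => (φ p : ℂ) := (integrable_of_abs_le_decay hmeas hδ hφdec).ofReal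
  have hint_sq := integrable_sq_of_abs_le_decay hmeas hδ hφdec
  have hsymb := lumpSymbol_mul_eq_of_ae_eq (continuous_FT2 hint)
    (continuous_FT2 hint_sq.ofReal) (hΦ.ae_eq_FT2 hint) hlump
  have hS0 := apply_zero_eq_zero_of_lumpSymbol_mul_eq_half_mul (continuous_FT2 hint)
    (continuous_FT2 hint_sq.ofReal) hsymb (by linarith)
  have hint0 : ∫ p, φ p ^ 2 = 0 := by
    simpa only [FT2_zero, integral_ofReal, RCLike.ofReal_eq_zero] using hS0
  filter_upwards [(integral_eq_zero_iff_of_nonneg (fun p => sq_nonneg (φ p)) hint_sq).1 hint0]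
    with p hp
  exact pow_eq_zero_iff two_ne_zero |>.mp hp

/-- **At most quadratic decay** (Remark 1.3): if a lump solution of the (rescaled) steady
fKP-I equation agrees a.e. with a continuous function decaying faster than quadratically at
infinity, then it vanishes identically (a.e.). -/
theorem lump_decays_at_most_quadratically (α : ℝ) (hα : 4 / 5 < α) (φ : ℝ × ℝ → ℝ)
    (hφ : IsLump α φ) (φt : ℝ × ℝ → ℝ) (hcont : Continuous φt)
    (hae : ∀ᵐ p : ℝ × ℝ ∂volume, φ p = φt p) (δ C : ℝ) (hδ : 2 < δ) (hC : 0 < C)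
    (hdec : ∀ p : ℝ × ℝ, |φt p| ≤ C * (1 + p.1 ^ 2 + p.2 ^ 2) ^ (-(δ / 2))) :
    ∀ᵐ p : ℝ × ℝ ∂volume, φ p = 0 :=
  lump_decays_at_most_quadratically_general α hα φ hφ φt hcont hae δ C hδ hdec
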